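/- Let (u^k, x^k, y^k), k ≥ 1, be the sequence generated by the T-ADMM algorithm with penalty parameter ρ ≥ 2. Then the primal residual vanishes: ‖x^{k+1} − x₀ − u^{k+1}‖₂² → 0 as k → ∞; that is, in the limit the equality constraint x = x₀ + u of the PAPR reduction model is satisfied. -/

import Mathlib

/-!
The box `X` is closed and convex, so `x₀` has a metric projection `x*` onto `X`, and
`(x* - x₀, x*, x* - x₀)` is a saddle point of the Lagrangian. Comparing the optimality conditions
of the two subproblems with those of the saddle point (monotonicity of the identity map and of
the normal cone of `X`) shows that `‖yᵏ - y*‖² + ρ²‖xᵏ - x*‖²` drops by at least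
`ρ²‖xᵏ⁺¹ - x₀ - uᵏ⁺¹‖²` at every step, so the squared residuals are summable.
-/

open scoped InnerProductSpace

/-- The augmented Lagrangian
`L_ρ(u, x, y) = (1/2)‖u‖₂² + Re(yᴴ(x − x₀ − u)) + (ρ/2)‖x − x₀ − u‖₂²`. -/
noncomputable def augLag {n : ℕ} (ρ : ℝ) (x₀ u x y : EuclideanSpace ℂ (Fin n)) : ℝ :=
  (1/2) * ‖u‖^2 + (⟪y, x - x₀ - u⟫_ℂ).re + (ρ/2) * ‖x - x₀ - u‖^2

open scoped RealInnerProductSpace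
open Filter Topology Finset

section Box

variable {𝕜 ι : Type*} [RCLike 𝕜]

theorem convex_setOf_forall_norm_apply_le (β : ℝ) :
    Convex ℝ {z : EuclideanSpace 𝕜 ι | ∀ i, ‖z i‖ ≤ β} := by
  simp only [Set.ofPred_forall]
  refine convex_iInter fun i => ?_
  simpa [Set.preimage] using (convex_closedBall (0 : 𝕜) β).linear_preimage
    ((EuclideanSpace.proj i : EuclideanSpace 𝕜 ι →L[𝕜] 𝕜).toLinearMap.restrictScalars ℝ)

theorem isClosed_setOf_forall_norm_apply_le (β : ℝ) :
    IsClosed {z : EuclideanSpace 𝕜 ι | ∀ i, ‖z i‖ ≤ β} := by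
  simp only [Set.ofPred_forall]
  exact isClosed_iInter fun i => isClosed_le (by fun_prop) continuous_const

end Box

section InnerProductSpace

variable {E : Type*} [NormedAddCommGroup E] [InnerProductSpace ℝ E]

theorem Convex.exists_mem_forall_inner_sub_nonneg {K : Set E} (hK : Convex ℝ K)
    (hne : K.Nonempty) (hc : IsComplete K) (x₀ : E) : ∃ xs ∈ K, ∀ z ∈ K, 0 ≤ ⟪xs - x₀, z - xs⟫ := by
  obtain ⟨xs, hxs, hmin⟩ := exists_norm_eq_iInf_of_complete_convex hne hc hK x₀
  refine ⟨xs, hxs, fun z hz => ?_⟩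
  have := (norm_eq_iInf_iff_real_inner_le_zero hK hxs).1 hmin z hz
  rw [← neg_sub, inner_neg_left]
  linarith

theorem Convex.inner_sub_nonneg_of_forall_le_add_sq {K : Set E} (hK : Convex ℝ K) {w g : E}
    {c : ℝ} (hw : w ∈ K) (h : ∀ z ∈ K, 0 ≤ ⟪g, z - w⟫ + c * ‖z - w‖ ^ 2) {z : E} (hz : z ∈ K) :
    0 ≤ ⟪g, z - w⟫ := by
  have hpos : ∀ t ∈ Set.Ioc (0 : ℝ) 1, 0 ≤ ⟪g, z - w⟫ + t * (c * ‖z - w‖ ^ 2) := by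
    rintro t ⟨ht0, ht1⟩
    have := h _ (hK.add_smul_sub_mem hw hz ⟨ht0.le, ht1⟩)
    rw [add_sub_cancel_left, real_inner_smul_right, norm_smul, Real.norm_eq_abs,
      abs_of_pos ht0] at this
    refine nonneg_of_mul_nonneg_right (a := t) ?_ ht0
    linarith
  have hlim : Tendsto (fun t : ℝ => ⟪g, z - w⟫ + t * (c * ‖z - w‖ ^ 2)) (𝓝[>] 0)
      (𝓝 ⟪g, z - w⟫) :=
    (Continuous.tendsto' (by fun_prop) 0 _ (by simp)).mono_left nhdsWithin_le_nhds
  exact ge_of_tendsto hlim (eventually_of_mem (Ioc_mem_nhdsGT one_pos) hpos)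

/-- Here `(xs - x₀, xs, xs - x₀)` is the saddle point `(u*, x*, y*)`. -/
theorem admm_lyapunov_step {ρ : ℝ} (hρ : 0 < ρ) {x₀ xs x x' u' y y' : E}
    (hy' : y' = y + ρ • (x' - x₀ - u')) (hu' : u' = y' + ρ • (x - x'))
    (hx : 0 ≤ ⟪y, x' - x⟫) (hx' : 0 ≤ ⟪y', x - x'⟫) (hxs' : 0 ≤ ⟪y', xs - x'⟫)
    (hxs : 0 ≤ ⟪xs - x₀, x' - xs⟫) :
    ‖y' - (xs - x₀)‖ ^ 2 + ρ ^ 2 * ‖x' - xs‖ ^ 2 + ρ ^ 2 * ‖x' - x₀ - u'‖ ^ 2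
      ≤ ‖y - (xs - x₀)‖ ^ 2 + ρ ^ 2 * ‖x - xs‖ ^ 2 := by
  set ys := xs - x₀
  set r := x' - x₀ - u'
  set d := x - x'
  set p := x' - xs
  set w := y' - ys
  set q := u' - ys
  have hq : q = w + ρ • d := by simp only [q, w]; rw [hu']; abel
  have hr : r = p - q := by simp only [r, p, q, ys]; abel
  have hdr : 0 ≤ ⟪d, r⟫ := by
    have h : ⟪y', d⟫ - ⟪y, d⟫ = ρ * ⟪r, d⟫ := by
      rw [← inner_sub_left, hy', add_sub_cancel_left, real_inner_smul_left]
    have : ⟪y, x' - x⟫ = -⟪y, d⟫ := by rw [← inner_neg_right, neg_sub]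
    rw [real_inner_comm]
    nlinarith
  have hwp : ⟪w, p⟫ ≤ 0 := by
    have : ⟪y', xs - x'⟫ = -⟪y', p⟫ := by rw [← inner_neg_right, neg_sub]
    rw [inner_sub_left]
    linarith
  have hid : ⟪w, r⟫ + ρ * ⟪d, r⟫ - ρ * ⟪d, p⟫ = ⟪w, p⟫ - ‖q‖ ^ 2 := by
    calc ⟪w, r⟫ + ρ * ⟪d, r⟫ - ρ * ⟪d, p⟫ = ⟪q, r⟫ - ρ * ⟪d, p⟫ := by
          rw [hq, inner_add_left, real_inner_smul_left]
      _ = ⟪q, p⟫ - ‖q‖ ^ 2 - ρ * ⟪d, p⟫ := by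
          rw [hr, inner_sub_right, real_inner_self_eq_norm_sq]
      _ = ⟪w, p⟫ - ‖q‖ ^ 2 := by
          rw [hq, inner_add_left, real_inner_smul_left]; ring
  have hVy : ‖y - ys‖ ^ 2 = ‖w‖ ^ 2 - 2 * (ρ * ⟪w, r⟫) + ρ ^ 2 * ‖r‖ ^ 2 := by
    rw [show y - ys = w - ρ • r by simp only [w]; rw [hy']; abel, norm_sub_sq_real,
      real_inner_smul_right, norm_smul, Real.norm_eq_abs, mul_pow, sq_abs]
  have hVx : ‖x - xs‖ ^ 2 = ‖d‖ ^ 2 + 2 * ⟪d, p⟫ + ‖p‖ ^ 2 := by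
    rw [show x - xs = d + p by simp only [d, p]; abel, norm_add_sq_real]
  rw [hVy, hVx]
  nlinarith [mul_nonneg hρ.le (neg_nonneg.2 hwp), mul_nonneg hρ.le (sq_nonneg ‖q‖),
    mul_nonneg (sq_nonneg ρ) hdr, mul_nonneg (sq_nonneg ρ) (sq_nonneg ‖d‖)]

end InnerProductSpace

theorem eq_add_smul_sub_of_admm_updates {V : Type*} [AddCommGroup V] [Module ℝ V] {ρ : ℝ}
    (hρ : 0 < ρ) {x₀ x x' u' y y' : V} (hu' : u' = (ρ / (ρ + 1)) • (x - x₀ + ρ⁻¹ • y))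
    (hy' : y' = y + ρ • (x' - x₀ - u')) : u' = y' + ρ • (x - x') := by
  have h : (ρ + 1) • u' = ρ • (x - x₀) + y := by
    rw [hu', smul_smul, mul_div_cancel₀ _ (by positivity), smul_add, smul_smul,
      mul_inv_cancel₀ hρ.ne', one_smul]
  rw [hy']
  linear_combination (norm := module) h

theorem tendsto_atTop_zero_of_add_mul_le {V g : ℕ → ℝ} {c : ℝ} (hc : 0 < c)
    (hV : ∀ k, 0 ≤ V k) (hg : ∀ k, 0 ≤ g k) (h : ∀ k, V (k + 1) + c * g k ≤ V k) :
    Tendsto g atTop (𝓝 0) := by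
  have hsum : ∀ N, c * ∑ i ∈ range N, g i + V N ≤ V 0 := by
    intro N
    induction N with
    | zero => simp
    | succ N ih => rw [sum_range_succ, mul_add]; linarith [h N]
  refine (summable_of_sum_range_le (c := V 0 / c) hg fun N => ?_).tendsto_atTop_zero
  rw [le_div_iff₀' hc]
  linarith [hsum N, hV N]

section AugmentedLagrangian

variable {n : ℕ}

theorem EuclideanSpace.re_inner_eq_real_inner {ι : Type*} [Fintype ι] (a b : EuclideanSpace ℂ ι) :
    (⟪a, b⟫_ℂ).re = ⟪a, b⟫_ℝ := by
  simp [inner]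

theorem augLag_eq_add_inner_add_sq (ρ : ℝ) (x₀ u w z y : EuclideanSpace ℂ (Fin n)) :
    augLag ρ x₀ u z y =
      augLag ρ x₀ u w y + ⟪y + ρ • (w - x₀ - u), z - w⟫_ℝ + ρ / 2 * ‖z - w‖ ^ 2 := by
  simp only [augLag, EuclideanSpace.re_inner_eq_real_inner]
  rw [show z - x₀ - u = (w - x₀ - u) + (z - w) by abel, norm_add_sq_real, inner_add_left,
    real_inner_smul_left, inner_add_right]
  ring

theorem inner_nonneg_of_isMinOn_augLag {K : Set (EuclideanSpace ℂ (Fin n))} (hK : Convex ℝ K)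
    {ρ : ℝ} {x₀ u w y : EuclideanSpace ℂ (Fin n)} (hw : w ∈ K)
    (hmin : IsMinOn (fun z => augLag ρ x₀ u z y) K w) {z : EuclideanSpace ℂ (Fin n)}
    (hz : z ∈ K) : 0 ≤ ⟪y + ρ • (w - x₀ - u), z - w⟫_ℝ := by
  refine hK.inner_sub_nonneg_of_forall_le_add_sq (c := ρ / 2) hw (fun z hz => ?_) hz
  have := isMinOn_iff.1 hmin z hz
  rw [augLag_eq_add_inner_add_sq ρ x₀ u w z y] at this
  linarith

end AugmentedLagrangian

theorem stmt_12_general (ρ : ℝ) (hρ : 0 < ρ)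
    {n : ℕ} (x₀ : EuclideanSpace ℂ (Fin n)) (β : ℝ)
    (u x y : ℕ → EuclideanSpace ℂ (Fin n))
    -- `u`-update: the unique minimizer of `u ↦ L_ρ(u, xᵏ, yᵏ)`
    (hu : ∀ k, 1 ≤ k → u (k+1) = (ρ/(ρ+1)) • (x k - x₀ + ρ⁻¹ • y k))
    -- `x`-update: a minimizer of `x ↦ L_ρ(uᵏ⁺¹, x, yᵏ)` over `X = {x : maxᵢ |xᵢ| ≤ β}`
    (hxfeas : ∀ k, 1 ≤ k → ∀ i, ‖x (k+1) i‖ ≤ β)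
    (hxmin : ∀ k, 1 ≤ k → ∀ z : EuclideanSpace ℂ (Fin n), (∀ i, ‖z i‖ ≤ β) →
      augLag ρ x₀ (u (k+1)) (x (k+1)) (y k) ≤ augLag ρ x₀ (u (k+1)) z (y k))
    -- multiplier update
    (hy : ∀ k, 1 ≤ k → y (k+1) = y k + ρ • (x (k+1) - x₀ - u (k+1))) :
    Filter.Tendsto (fun k => ‖x (k+1) - x₀ - u (k+1)‖^2) Filter.atTop (nhds 0) := by
  have hX : Convex ℝ {z : EuclideanSpace ℂ (Fin n) | ∀ i, ‖z i‖ ≤ β} :=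
    convex_setOf_forall_norm_apply_le β
  obtain ⟨xs, hxs, hsaddle⟩ := hX.exists_mem_forall_inner_sub_nonneg ⟨x 2, hxfeas 1 le_rfl⟩
    (isClosed_setOf_forall_norm_apply_le β).isComplete x₀
  have hVI : ∀ k, 1 ≤ k → ∀ z, (∀ i, ‖z i‖ ≤ β) → 0 ≤ ⟪y (k+1), z - x (k+1)⟫_ℝ := by
    intro k hk z hz
    rw [hy k hk]
    exact inner_nonneg_of_isMinOn_augLag hX (hxfeas k hk) (isMinOn_iff.2 (hxmin k hk)) hz
  refine (tendsto_add_atTop_iff_nat 2).1 <| tendsto_atTop_zero_of_add_mul_le (pow_pos hρ 2)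
    (V := fun j => ‖y (j+2) - (xs - x₀)‖ ^ 2 + ρ ^ 2 * ‖x (j+2) - xs‖ ^ 2)
    (fun _ => by positivity) (fun _ => by positivity) fun j => ?_
  have hk : 1 ≤ j + 2 := by omega
  exact admm_lyapunov_step hρ (hy _ hk) (eq_add_smul_sub_of_admm_updates hρ (hu _ hk) (hy _ hk))
    (hVI (j+1) (by omega) _ (hxfeas _ hk)) (hVI _ hk _ (hxfeas (j+1) (by omega)))
    (hVI _ hk _ hxs) (hsaddle _ (hxfeas _ hk))

theorem stmt_12 (ρ : ℝ) (hρ : 0 < ρ)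
    {n : ℕ} (x₀ : EuclideanSpace ℂ (Fin n)) (β : ℝ) (hβ : 0 < β)
    (u x y : ℕ → EuclideanSpace ℂ (Fin n))
    -- `u`-update: the unique minimizer of `u ↦ L_ρ(u, xᵏ, yᵏ)`
    (hu : ∀ k, 1 ≤ k → u (k+1) = (ρ/(ρ+1)) • (x k - x₀ + ρ⁻¹ • y k))
    -- `x`-update: a minimizer of `x ↦ L_ρ(uᵏ⁺¹, x, yᵏ)` over `X = {x : maxᵢ |xᵢ| ≤ β}`
    (hxfeas : ∀ k, 1 ≤ k → ∀ i, ‖x (k+1) i‖ ≤ β)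
    (hxmin : ∀ k, 1 ≤ k → ∀ z : EuclideanSpace ℂ (Fin n), (∀ i, ‖z i‖ ≤ β) →
      augLag ρ x₀ (u (k+1)) (x (k+1)) (y k) ≤ augLag ρ x₀ (u (k+1)) z (y k))
    -- multiplier update
    (hy : ∀ k, 1 ≤ k → y (k+1) = y k + ρ • (x (k+1) - x₀ - u (k+1)))
    (hρ2 : 2 ≤ ρ) :
    Filter.Tendsto (fun k => ‖x (k+1) - x₀ - u (k+1)‖^2) Filter.atTop (nhds 0) :=
  stmt_12_general ρ hρ x₀ β u x y hu hxfeas hxmin hy
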